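/- arXiv:1012.1913 — 2 statements merged into one kernel-verified Lean document; each statement's English description precedes it below -/
import Mathlib

section
/- Let A⁰_j be defined recursively by A^i_{i-1} = 2TL_i² and A^i_j = 2TL_i²(Σ_{k=j+1}^{i-1} A^k_j + 1) for i ≥ j+2, where T > 0 and L_1, ..., L_m > 0. Suppose nonnegative reals e_0, ..., e_{m-1} and d_0, ..., d_{m-1} satisfy d_0 = 0 and d_{l+1} ≤ 2TL_{l+1}² Σ_{i=0}^{l} (d_i + e_i) for 0 ≤ l ≤ m−2. Then d_i ≤ Σ_{j=0}^{i-1} A^i_j e_j for all 1 ≤ i ≤ m−1. -/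
/-!
Writing `c l = 2TL_l²`, the constants satisfy `A i j = c i (∑_{j<k<i} A k j + 1)`, which is exactly
the statement that the bound `d i ≤ ∑_{j<i} A i j e j` turns into an equality after one step of
the recursion `d (l+1) ≤ c (l+1) ∑_{i≤l} (d i + e i)`. Strong induction on `i` then propagates the
bound, since `c ≥ 0` makes the right-hand side of the recursion monotone in the `d i`.
-/

/-- The constants `A^i_j` from the proof of Lemma 4.2:
`A i j = 2T L_i² (∑_{k=j+1}^{i-1} A k j + 1)` (so `A (j+1) j = 2T L_{j+1}²`). -/
noncomputable def Aconst (T : ℝ) (L : ℕ → ℝ) : ℕ → ℕ → ℝ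
  | i, j =>
    2 * T * (L i) ^ 2 * ((∑ k ∈ (Finset.Ioo j i).attach, Aconst T L k.1 j) + 1)
termination_by i j => i
decreasing_by exact (Finset.mem_Ioo.mp k.2).2

open Finset

theorem Aconst_eq (T : ℝ) (L : ℕ → ℝ) (i j : ℕ) :
    Aconst T L i j = 2 * T * L i ^ 2 * (∑ k ∈ Ioo j i, Aconst T L k j + 1) := by
  rw [Aconst, sum_attach (Ioo j i) (fun k => Aconst T L k j)]

theorem sum_range_sum_range_eq_sum_sum_Ioo {M : Type*} [AddCommMonoid M] (f : ℕ → ℕ → M)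
    (n : ℕ) :
    ∑ i ∈ range n, ∑ j ∈ range i, f i j = ∑ j ∈ range n, ∑ k ∈ Ioo j n, f k j :=
  sum_comm' fun i j => by simp only [mem_range, mem_Ioo]; omega

section DiscreteGronwall

variable {c : ℕ → ℝ} {A : ℕ → ℕ → ℝ} (hA : ∀ i j, A i j = c i * (∑ k ∈ Ioo j i, A k j + 1))
include hA

theorem mul_sum_range_add_eq_of_rec (e : ℕ → ℝ) (n : ℕ) :
    c n * ∑ i ∈ range n, (∑ j ∈ range i, A i j * e j + e i)
      = ∑ j ∈ range n, A n j * e j := by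
  rw [sum_add_distrib, sum_range_sum_range_eq_sum_sum_Ioo, ← sum_add_distrib, mul_sum]
  refine sum_congr rfl fun j _ => ?_
  rw [hA n j, ← sum_mul]
  ring

theorem le_sum_mul_of_le_mul_sum_range (hc : ∀ i, 0 ≤ c i) {e d : ℕ → ℝ} (hd0 : d 0 = 0)
    {N : ℕ} (hrec : ∀ l < N, d (l + 1) ≤ c (l + 1) * ∑ i ∈ range (l + 1), (d i + e i)) :
    ∀ i ≤ N, d i ≤ ∑ j ∈ range i, A i j * e j := by
  intro i
  induction i using Nat.strong_induction_on with
  | _ i ih =>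
    intro hi
    cases i with
    | zero => simp [hd0]
    | succ l =>
      calc d (l + 1) ≤ c (l + 1) * ∑ i ∈ range (l + 1), (d i + e i) := hrec l hi
        _ ≤ c (l + 1) * ∑ i ∈ range (l + 1), (∑ j ∈ range i, A i j * e j + e i) := by
          gcongr with i hil
          · exact hc _
          · have hil := mem_range.mp hil
            exact ih i hil (by omega)
        _ = ∑ j ∈ range (l + 1), A (l + 1) j * e j := mul_sum_range_add_eq_of_rec hA e (l + 1)

end DiscreteGronwall

theorem discrete_gronwall_Aconst_general (T : ℝ) (hT : 0 < T) (m : ℕ)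
    (L : ℕ → ℝ)
    (e d : ℕ → ℝ)
    (hd0 : d 0 = 0)
    (hrec : ∀ l : ℕ, l ≤ m - 2 →
      d (l + 1) ≤ 2 * T * (L (l + 1)) ^ 2 * ∑ i ∈ Finset.range (l + 1), (d i + e i)) :
    ∀ i : ℕ, 1 ≤ i → i ≤ m - 1 → d i ≤ ∑ j ∈ Finset.range i, Aconst T L i j * e j := by
  intro i _ hi
  exact le_sum_mul_of_le_mul_sum_range (Aconst_eq T L) (fun _ => by positivity) hd0
    (fun l hl => hrec l (by omega)) i hi

/-- Discrete Gronwall-type estimate from the proof of Lemma 4.2. -/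
theorem discrete_gronwall_Aconst (T : ℝ) (hT : 0 < T) (m : ℕ) (hm : 1 ≤ m)
    (L : ℕ → ℝ) (hL : ∀ i, 0 < L i)
    (e d : ℕ → ℝ) (he : ∀ i, 0 ≤ e i) (hd : ∀ i, 0 ≤ d i)
    (hd0 : d 0 = 0)
    (hrec : ∀ l : ℕ, l ≤ m - 2 →
      d (l + 1) ≤ 2 * T * (L (l + 1)) ^ 2 * ∑ i ∈ Finset.range (l + 1), (d i + e i)) :
    ∀ i : ℕ, 1 ≤ i → i ≤ m - 1 → d i ≤ ∑ j ∈ Finset.range i, Aconst T L i j * e j :=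
  discrete_gronwall_Aconst_general T hT m L e d hd0 hrec
end

section
/- Let 0 ≤ σ̲² < σ̄², T > 0, and suppose K : [0,T] → ℝ is nondecreasing with σ̲²(t−s) ≤ K(t) − K(s) ≤ σ̄²(t−s) for all 0 ≤ s ≤ t ≤ T, and additionally K(t) − K(s) = σ̄²(t−s) whenever s, t lie in the same interval [2iT/(2n), (2i+1)T/(2n)] and K(t) − K(s) = σ̲²(t−s) whenever s, t lie in the same interval [(2i+1)T/(2n), (2i+2)T/(2n)]. Then ∫_0^T δ_{2n}(s) dK(s) = (σ̄² − σ̲²)T/2. -/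
open MeasureTheory Filter Set

noncomputable def deltaFn (T : ℝ) (n : ℕ) (s : ℝ) : ℝ :=
  ∑ i ∈ Finset.range n,
    (-1 : ℝ) ^ i * Set.indicator (Set.Ioc ((i : ℝ) * T / n) (((i : ℝ) + 1) * T / n)) (fun _ => 1) s

/-!
On the `i`-th of the `2n` cells of `(0, T]` the Stieltjes measure of `K` is the increment
`K(b) - K(a)`, which equals `σ̄² T / (2n)` on even cells and `σ̲² T / (2n)` on odd ones; `δ_{2n}`
weights these with alternating signs, so each pair of adjacent cells contributes
`(σ̄² - σ̲²) T / (2n)`, and the `n` pairs add up to `(σ̄² - σ̲²) T / 2`.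
-/

theorem Finset.sum_range_two_mul {M : Type*} [AddCommMonoid M] (f : ℕ → M) (n : ℕ) :
    ∑ i ∈ Finset.range (2 * n), f i = ∑ j ∈ Finset.range n, (f (2 * j) + f (2 * j + 1)) := by
  induction n with
  | zero => simp
  | succ n ih =>
    rw [mul_add_one, Finset.sum_range_succ, Finset.sum_range_succ, Finset.sum_range_succ, ih,
      add_assoc]

namespace StieltjesFunction

variable (K : StieltjesFunction ℝ)

theorem integrable_indicator_Ioc (a b : ℝ) :
    Integrable ((Ioc a b).indicator fun _ => (1 : ℝ)) K.measure :=
  (integrable_indicator_iff measurableSet_Ioc).2 (integrableOn_const measure_Ioc_lt_top.ne)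

theorem setIntegral_indicator_Ioc {a b : ℝ} (hab : a ≤ b) {s : Set ℝ} (hs : Ioc a b ⊆ s) :
    ∫ x in s, (Ioc a b).indicator (fun _ => (1 : ℝ)) x ∂K.measure = K b - K a := by
  rw [setIntegral_indicator measurableSet_Ioc, inter_eq_self_of_subset_right hs, setIntegral_const,
    smul_eq_mul, mul_one, measureReal_def, K.measure_Ioc,
    ENNReal.toReal_ofReal (sub_nonneg.2 (K.mono hab))]

end StieltjesFunction

theorem Ioc_div_subset_Ioc {T : ℝ} (hT : 0 ≤ T) {N i : ℕ} (hi : i < N) :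
    Ioc ((i : ℝ) * T / N) (((i : ℝ) + 1) * T / N) ⊆ Ioc 0 T := by
  have hN : (0 : ℝ) < N := by exact_mod_cast (Nat.zero_le i).trans_lt hi
  have hiN : (i : ℝ) + 1 ≤ N := by exact_mod_cast hi
  refine Ioc_subset_Ioc (by positivity) ?_
  rw [div_le_iff₀ hN]
  nlinarith

theorem integral_deltaFn_eq_sum (K : StieltjesFunction ℝ) {T : ℝ} (hT : 0 ≤ T) (N : ℕ) :
    ∫ s in Ioc 0 T, deltaFn T N s ∂K.measure =
      ∑ i ∈ Finset.range N, (-1 : ℝ) ^ i * (K (((i : ℝ) + 1) * T / N) - K ((i : ℝ) * T / N)) := by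
  unfold deltaFn
  rw [integral_finsetSum]
  · refine Finset.sum_congr rfl fun i hi => ?_
    rw [integral_const_mul, K.setIntegral_indicator_Ioc (by gcongr; linarith)
      (Ioc_div_subset_Ioc hT (Finset.mem_range.1 hi))]
  · exact fun i _ => ((K.integrable_indicator_Ioc _ _).integrableOn).const_mul _

theorem sub_eq_mul_sub_of_forall_Icc {f : ℝ → ℝ} {a b c : ℝ} (hab : a ≤ b)
    (h : ∀ s t : ℝ, s ∈ Icc a b → t ∈ Icc a b → s ≤ t → f t - f s = c * (t - s)) :
    f b - f a = c * (b - a) :=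
  h a b (left_mem_Icc.2 hab) (right_mem_Icc.2 hab) hab

theorem integral_deltaFn_stieltjes_eq_max_general (T : ℝ) (hT : 0 < T)
    (σl2 σb2 : ℝ)
    (n : ℕ) (hn : 1 ≤ n)
    (K : StieltjesFunction ℝ)
    (hup : ∀ i : ℕ, i < n → ∀ s t : ℝ,
      s ∈ Set.Icc (2 * (i:ℝ) * T / (2 * n)) ((2 * (i:ℝ) + 1) * T / (2 * n)) →
      t ∈ Set.Icc (2 * (i:ℝ) * T / (2 * n)) ((2 * (i:ℝ) + 1) * T / (2 * n)) →
      s ≤ t → K t - K s = σb2 * (t - s))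
    (hlo : ∀ i : ℕ, i < n → ∀ s t : ℝ,
      s ∈ Set.Icc ((2 * (i:ℝ) + 1) * T / (2 * n)) ((2 * (i:ℝ) + 2) * T / (2 * n)) →
      t ∈ Set.Icc ((2 * (i:ℝ) + 1) * T / (2 * n)) ((2 * (i:ℝ) + 2) * T / (2 * n)) →
      s ≤ t → K t - K s = σl2 * (t - s)) :
    (∫ s in Set.Ioc (0:ℝ) T, deltaFn T (2 * n) s ∂K.measure) = (σb2 - σl2) * T / 2 := by
  have hpair : ∀ j ∈ Finset.range n,
      (-1 : ℝ) ^ (2 * j) * (K ((↑(2 * j) + 1) * T / ↑(2 * n)) - K (↑(2 * j) * T / ↑(2 * n))) +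
        (-1 : ℝ) ^ (2 * j + 1) *
          (K ((↑(2 * j + 1) + 1) * T / ↑(2 * n)) - K (↑(2 * j + 1) * T / ↑(2 * n))) =
      (σb2 - σl2) * (T / (2 * n)) := fun j hj => by
    have hj := Finset.mem_range.1 hj
    have heven := sub_eq_mul_sub_of_forall_Icc (by gcongr; linarith) (hup j hj)
    have hodd := sub_eq_mul_sub_of_forall_Icc (by gcongr; linarith) (hlo j hj)
    push_cast
    rw [show 2 * (j : ℝ) + 1 + 1 = 2 * j + 2 by ring, heven, hodd, pow_succ, pow_mul]
    ring
  have hn0 : (n : ℝ) ≠ 0 := by positivity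
  rw [integral_deltaFn_eq_sum K hT.le, Finset.sum_range_two_mul, Finset.sum_congr rfl hpair,
    Finset.sum_const, Finset.card_range, nsmul_eq_mul]
  field_simp

theorem integral_deltaFn_stieltjes_eq_max (T : ℝ) (hT : 0 < T)
    (σl2 σb2 : ℝ) (hσl2 : 0 ≤ σl2) (hσ : σl2 < σb2)
    (n : ℕ) (hn : 1 ≤ n)
    (K : StieltjesFunction ℝ)
    (hbounds : ∀ s t : ℝ, 0 ≤ s → s ≤ t → t ≤ T →
      σl2 * (t - s) ≤ K t - K s ∧ K t - K s ≤ σb2 * (t - s))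
    (hup : ∀ i : ℕ, i < n → ∀ s t : ℝ,
      s ∈ Set.Icc (2 * (i:ℝ) * T / (2 * n)) ((2 * (i:ℝ) + 1) * T / (2 * n)) →
      t ∈ Set.Icc (2 * (i:ℝ) * T / (2 * n)) ((2 * (i:ℝ) + 1) * T / (2 * n)) →
      s ≤ t → K t - K s = σb2 * (t - s))
    (hlo : ∀ i : ℕ, i < n → ∀ s t : ℝ,
      s ∈ Set.Icc ((2 * (i:ℝ) + 1) * T / (2 * n)) ((2 * (i:ℝ) + 2) * T / (2 * n)) →
      t ∈ Set.Icc ((2 * (i:ℝ) + 1) * T / (2 * n)) ((2 * (i:ℝ) + 2) * T / (2 * n)) →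
      s ≤ t → K t - K s = σl2 * (t - s)) :
    (∫ s in Set.Ioc (0:ℝ) T, deltaFn T (2 * n) s ∂K.measure) = (σb2 - σl2) * T / 2 :=
  integral_deltaFn_stieltjes_eq_max_general T hT σl2 σb2 n hn K hup hlo
end
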